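/- arXiv:1411.5236 — 3 statements merged into one kernel-verified Lean document; each statement's English description precedes it below -/
import Mathlib

section
/- Let X and Y be irreducible 1-step shifts of finite type over finite alphabets, Z a shift space, and φ : X → Y, ψ : Y → Z 1-block factor codes, with π = ψ ∘ φ. Then for every x ∈ X, the φ/ψ-transition class of x equals the π-transition class of x: [x]_{φ/ψ} = [x]_π. -/
/- Common definitions: shift spaces over finite alphabets, 1-block factor codes,
   transition classes, class degrees, relative transition classes, relative class
   degrees, routability and depth. -/

open Set

namespace SymbDyn

variable {A B C D : Type*}

/-- The shift map `σ` on bi-infinite sequences. -/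
def shift (α : Type*) : (ℤ → α) → (ℤ → α) := fun x i => x (i + 1)

/-- The map on points induced letterwise by a symbol map (a 1-block code). -/
def sliding (Φ : A → B) : (ℤ → A) → (ℤ → B) := fun x i => Φ (x i)

/-- The block `w` occurs in the point `x` starting at coordinate `n`. -/
def OccursAt (x : ℤ → A) (w : List A) (n : ℤ) : Prop :=
  ∀ i : ℕ, i < w.length → w[i]? = some (x (n + i))

/-- The block `w` occurs somewhere in the point `x`. -/
def OccursInPoint (x : ℤ → A) (w : List A) : Prop := ∃ n : ℤ, OccursAt x w n

/-- The block `w` occurs in (a point of) the subset `X`. -/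
def BlockOccursIn (X : Set (ℤ → A)) (w : List A) : Prop := ∃ x ∈ X, OccursInPoint x w

/-- `X` is a shift space: nonempty, closed (product of discrete topologies) and
shift-invariant. -/
def IsShiftSpace [TopologicalSpace A] (X : Set (ℤ → A)) : Prop :=
  X.Nonempty ∧ IsClosed X ∧ shift A '' X = X

/-- `X` is irreducible: any two blocks of `X` can be connected inside `X`. -/
def IsIrreducibleShift (X : Set (ℤ → A)) : Prop :=
  ∀ u v : List A, BlockOccursIn X u → BlockOccursIn X v →
    ∃ t : List A, BlockOccursIn X (u ++ t ++ v)

/-- `X` is a 1-step shift of finite type: any point all of whose 2-blocks occur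
in `X` lies in `X`. -/
def IsOneStepSFT (X : Set (ℤ → A)) : Prop :=
  ∀ z : ℤ → A, (∀ i : ℤ, BlockOccursIn X [z i, z (i + 1)]) → z ∈ X

/-- `x` is right transitive in `X`: every block of `X` occurs in `x|_[0,∞)`. -/
def RightTransitive (X : Set (ℤ → A)) (x : ℤ → A) : Prop :=
  ∀ w : List A, BlockOccursIn X w → ∃ n : ℤ, 0 ≤ n ∧ OccursAt x w n

/-- `x` is left transitive in `X`: every block of `X` occurs in `x|_(-∞,0]`. -/
def LeftTransitive (X : Set (ℤ → A)) (x : ℤ → A) : Prop :=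
  ∀ w : List A, BlockOccursIn X w → ∃ n : ℤ, n + w.length ≤ 1 ∧ OccursAt x w n

/-- `x` is bi-transitive in `X`. -/
def BiTransitive (X : Set (ℤ → A)) (x : ℤ → A) : Prop :=
  RightTransitive X x ∧ LeftTransitive X x

/-- `x` is recurrent: every block of `x` occurs infinitely often to the right. -/
def Recurrent (x : ℤ → A) : Prop :=
  ∀ w : List A, OccursInPoint x w → ∀ n : ℤ, ∃ m : ℤ, n ≤ m ∧ OccursAt x w m

/-- `xb` is a `(π,m)`-bridge from `x` to `x'` (all living in `X`). -/
def IsBridge (X : Set (ℤ → A)) (π : (ℤ → A) → ℤ → C) (m : ℤ) (x x' xb : ℤ → A) : Prop :=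
  xb ∈ X ∧ (∀ i : ℤ, i ≤ m → xb i = x i) ∧
    (∃ n : ℤ, m < n ∧ ∀ i : ℤ, n ≤ i → xb i = x' i) ∧ π xb = π x

/-- `x →_π x'`: `π x = π x'` and there is a `(π,m)`-bridge from `x` to `x'`
for every `m`. -/
def TransTo (X : Set (ℤ → A)) (π : (ℤ → A) → ℤ → C) (x x' : ℤ → A) : Prop :=
  π x = π x' ∧ ∀ m : ℤ, ∃ xb, IsBridge X π m x x' xb

/-- `x ∼_π x'`. -/
def TransEquiv (X : Set (ℤ → A)) (π : (ℤ → A) → ℤ → C) (x x' : ℤ → A) : Prop :=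
  TransTo X π x x' ∧ TransTo X π x' x

/-- The `π`-transition class `[x]_π` of `x` inside `X`. -/
def transClass (X : Set (ℤ → A)) (π : (ℤ → A) → ℤ → C) (x : ℤ → A) : Set (ℤ → A) :=
  {x' | x' ∈ X ∧ TransEquiv X π x x'}

/-- The number `d_π(z)` of `π`-transition classes over the point `z`. -/
noncomputable def ptDeg (X : Set (ℤ → A)) (π : (ℤ → A) → ℤ → C) (z : ℤ → C) : ℕ∞ :=
  {S : Set (ℤ → A) | ∃ x ∈ X, π x = z ∧ S = transClass X π x}.encard

/-- The class degree `d_π = min_{z ∈ Z} d_π(z)`. -/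
noncomputable def classDeg (X : Set (ℤ → A)) (Z : Set (ℤ → C)) (π : (ℤ → A) → ℤ → C) : ℕ∞ :=
  ⨅ z ∈ Z, ptDeg X π z

/-- `xb` is a `(φ/ψ,m)`-bridge from `x` to `x'` relative to `ψ` (whose transition
relation lives on `Y`). -/
def IsRelBridge (X : Set (ℤ → A)) (Y : Set (ℤ → B)) (φ : (ℤ → A) → ℤ → B)
    (ψ : (ℤ → B) → ℤ → C) (m : ℤ) (x x' xb : ℤ → A) : Prop :=
  xb ∈ X ∧ (∀ i : ℤ, i ≤ m → xb i = x i) ∧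
    (∃ n : ℤ, m < n ∧ ∀ i : ℤ, n ≤ i → xb i = x' i) ∧ TransEquiv Y ψ (φ xb) (φ x)

/-- `x →_{φ/ψ} x'`. -/
def RelTransTo (X : Set (ℤ → A)) (Y : Set (ℤ → B)) (φ : (ℤ → A) → ℤ → B)
    (ψ : (ℤ → B) → ℤ → C) (x x' : ℤ → A) : Prop :=
  TransEquiv Y ψ (φ x) (φ x') ∧ ∀ m : ℤ, ∃ xb, IsRelBridge X Y φ ψ m x x' xb

/-- `x ∼_{φ/ψ} x'`. -/
def RelTransEquiv (X : Set (ℤ → A)) (Y : Set (ℤ → B)) (φ : (ℤ → A) → ℤ → B)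
    (ψ : (ℤ → B) → ℤ → C) (x x' : ℤ → A) : Prop :=
  RelTransTo X Y φ ψ x x' ∧ RelTransTo X Y φ ψ x' x

/-- The `φ/ψ`-transition class `[x]_{φ/ψ}` of `x`. -/
def relClass (X : Set (ℤ → A)) (Y : Set (ℤ → B)) (φ : (ℤ → A) → ℤ → B)
    (ψ : (ℤ → B) → ℤ → C) (x : ℤ → A) : Set (ℤ → A) :=
  {x' | x' ∈ X ∧ RelTransEquiv X Y φ ψ x x'}

/-- The number `d_{φ/ψ}(y)` of `φ/ψ`-transition classes over `y`. -/
noncomputable def relPtDeg (X : Set (ℤ → A)) (Y : Set (ℤ → B)) (φ : (ℤ → A) → ℤ → B)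
    (ψ : (ℤ → B) → ℤ → C) (y : ℤ → B) : ℕ∞ :=
  {S : Set (ℤ → A) | ∃ x ∈ X, φ x = y ∧ S = relClass X Y φ ψ x}.encard

/-- The class degree `d_{φ/ψ} = min_{y ∈ Y} d_{φ/ψ}(y)` of `φ` relative to `ψ`. -/
noncomputable def relClassDeg (X : Set (ℤ → A)) (Y : Set (ℤ → B)) (φ : (ℤ → A) → ℤ → B)
    (ψ : (ℤ → B) → ℤ → C) : ℕ∞ :=
  ⨅ y ∈ Y, relPtDeg X Y φ ψ y

/-- The block `x|_{[s, s+l-1]}`. -/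
def segment (x : ℤ → A) (s : ℤ) (l : ℕ) : List A := (List.range l).map fun i => x (s + i)

/-- The block `u` (of the same length as `w`) is routable through the symbol `a`
at coordinate `n` (coordinates start at 1) with respect to the 1-block code
induced by `Θ`, over the target block `w`. -/
def RoutableThru (X : Set (ℤ → A)) (Θ : A → C) (w : List C) (n : ℕ) (a : A)
    (u : List A) : Prop :=
  ∃ v : List A, BlockOccursIn X v ∧ v.length = u.length ∧ v.map Θ = w ∧
    v[0]? = u[0]? ∧ v[v.length - 1]? = u[u.length - 1]? ∧
    v[n - 1]? = some a

/-- `u` is `φ/ψ`-routable through `a` at `n` over the block `w` of `Y`. -/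
def RelRoutable (X : Set (ℤ → A)) (Φ : A → B) (Ψ : B → C) (w : List B) (n : ℕ) (a : A)
    (u : List A) : Prop :=
  RoutableThru X (Ψ ∘ Φ) (w.map Ψ) n a u

/-- The block `w` of `Y` is `φ/ψ`-presented through `M` at `n`. -/
def RelPresented (X : Set (ℤ → A)) (Φ : A → B) (Ψ : B → C) (w : List B) (n : ℕ)
    (M : Set A) : Prop :=
  ∀ u : List A, BlockOccursIn X u → u.map Φ = w → ∃ a ∈ M, RelRoutable X Φ Ψ w n a u

/-- The `φ/ψ`-depth `d_{φ/ψ}(w)` of a block `w`. -/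
noncomputable def relDepth (X : Set (ℤ → A)) (Φ : A → B) (Ψ : B → C) (w : List B) : ℕ∞ :=
  sInf {k : ℕ∞ | ∃ n : ℕ, 1 ≤ n ∧ n ≤ w.length ∧
    ∃ M : Finset A, RelPresented X Φ Ψ w n ↑M ∧ k = (M.card : ℕ∞)}

end SymbDyn

/-! A `π`-bridge maps under `φ` to a point that is right asymptotic to an endpoint with the
same `ψ`-image, hence `ψ`-equivalent to it; since `∼_ψ` is transitive on a 1-step SFT
(bridges can be spliced at a common symbol), every `π`-bridge is already a `φ/ψ`-bridge.
The converse inclusion only forgets information. -/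

namespace SymbDyn

section Transition

variable {A B C : Type*}

lemma blockOccursIn_pair {Y : Set (ℤ → B)} {p : ℤ → B} (hp : p ∈ Y) (i : ℤ) :
    BlockOccursIn Y [p i, p (i + 1)] := by
  refine ⟨p, hp, i, fun k hk => ?_⟩
  rcases (by simp at hk; omega : k = 0 ∨ k = 1) with rfl | rfl <;> simp

lemma IsOneStepSFT.ite_mem {Y : Set (ℤ → B)} (hY : IsOneStepSFT Y) {p q : ℤ → B}
    (hp : p ∈ Y) (hq : q ∈ Y) {n : ℤ} (hn : p n = q n) :
    (fun i => if i ≤ n then p i else q i) ∈ Y := by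
  refine hY _ fun i => ?_
  rcases lt_trichotomy i n with h | rfl | h
  · simpa [h.le, Int.add_one_le_iff.mpr h] using blockOccursIn_pair hp i
  · simpa [hn] using blockOccursIn_pair hq i
  · simpa [not_le.mpr h, not_le.mpr (h.trans (lt_add_one i))] using blockOccursIn_pair hq i

lemma TransTo.trans {Y : Set (ℤ → B)} (hY : IsOneStepSFT Y) {Ψ : B → C} {y₁ y₂ y₃ : ℤ → B}
    (h₁₂ : TransTo Y (sliding Ψ) y₁ y₂) (h₂₃ : TransTo Y (sliding Ψ) y₂ y₃) :
    TransTo Y (sliding Ψ) y₁ y₃ := by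
  refine ⟨h₁₂.1.trans h₂₃.1, fun m => ?_⟩
  obtain ⟨b₁, hb₁, hb₁l, ⟨n₁, hmn₁, hb₁r⟩, hb₁Ψ⟩ := h₁₂.2 m
  obtain ⟨b₂, hb₂, hb₂l, ⟨n₂, hn₁n₂, hb₂r⟩, hb₂Ψ⟩ := h₂₃.2 n₁
  refine ⟨_, hY.ite_mem hb₁ hb₂ ((hb₁r n₁ le_rfl).trans (hb₂l n₁ le_rfl).symm),
    fun i hi => ?_, ⟨n₂, hmn₁.trans hn₁n₂, fun i hi => ?_⟩, funext fun i => ?_⟩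
  · simp [hi.trans hmn₁.le, hb₁l i hi]
  · simp [show ¬ i ≤ n₁ by omega, hb₂r i hi]
  · by_cases h : i ≤ n₁
    · simpa [sliding, h] using congrFun hb₁Ψ i
    · show Ψ (if i ≤ n₁ then b₁ i else b₂ i) = Ψ (y₁ i)
      rw [if_neg h]
      exact (congrFun hb₂Ψ i).trans (congrFun h₁₂.1 i).symm

lemma TransEquiv.symm {X : Set (ℤ → A)} {π : (ℤ → A) → ℤ → C} {x x' : ℤ → A}
    (h : TransEquiv X π x x') : TransEquiv X π x' x :=
  And.symm h

lemma TransEquiv.trans {Y : Set (ℤ → B)} (hY : IsOneStepSFT Y) {Ψ : B → C} {y₁ y₂ y₃ : ℤ → B}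
    (h₁₂ : TransEquiv Y (sliding Ψ) y₁ y₂) (h₂₃ : TransEquiv Y (sliding Ψ) y₂ y₃) :
    TransEquiv Y (sliding Ψ) y₁ y₃ :=
  ⟨h₁₂.1.trans hY h₂₃.1, h₂₃.2.trans hY h₁₂.2⟩

lemma transEquiv_of_right_asymptotic {Y : Set (ℤ → B)} {π : (ℤ → B) → ℤ → C} {p q : ℤ → B}
    (hp : p ∈ Y) (hq : q ∈ Y) (hpq : π p = π q) {n : ℤ} (hasymp : ∀ i, n ≤ i → p i = q i) :
    TransEquiv Y π p q := by
  have hlt : ∀ m : ℤ, m < max n (m + 1) := fun m => (lt_add_one m).trans_le (le_max_right _ _)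
  exact ⟨⟨hpq, fun m => ⟨p, hp, fun _ _ => rfl,
      ⟨_, hlt m, fun i hi => hasymp i ((le_max_left _ _).trans hi)⟩, rfl⟩⟩,
    ⟨hpq.symm, fun m => ⟨q, hq, fun _ _ => rfl,
      ⟨_, hlt m, fun i hi => (hasymp i ((le_max_left _ _).trans hi)).symm⟩, rfl⟩⟩⟩

variable {X : Set (ℤ → A)} {Y : Set (ℤ → B)} {Φ : A → B} {Ψ : B → C}

lemma RelTransTo.transTo {x x' : ℤ → A} (h : RelTransTo X Y (sliding Φ) (sliding Ψ) x x') :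
    TransTo X (sliding (Ψ ∘ Φ)) x x' :=
  ⟨h.1.1.1, fun m =>
    let ⟨xb, hxb, hl, hr, hxbx⟩ := h.2 m
    ⟨xb, hxb, hl, hr, hxbx.1.1⟩⟩

lemma TransTo.map_sliding (hXY : MapsTo (sliding Φ) X Y) {x x' : ℤ → A}
    (h : TransTo X (sliding (Ψ ∘ Φ)) x x') :
    TransTo Y (sliding Ψ) (sliding Φ x) (sliding Φ x') :=
  ⟨h.1, fun m =>
    let ⟨xb, hxb, hl, ⟨n, hmn, hr⟩, hπ⟩ := h.2 m
    ⟨sliding Φ xb, hXY hxb, fun i hi => congrArg Φ (hl i hi),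
      ⟨n, hmn, fun i hi => congrArg Φ (hr i hi)⟩, hπ⟩⟩

lemma TransEquiv.relTransTo (hY : IsOneStepSFT Y) (hXY : MapsTo (sliding Φ) X Y)
    {x x' : ℤ → A} (hx' : x' ∈ X) (h : TransEquiv X (sliding (Ψ ∘ Φ)) x x') :
    RelTransTo X Y (sliding Φ) (sliding Ψ) x x' := by
  have hxx' : TransEquiv Y (sliding Ψ) (sliding Φ x) (sliding Φ x') :=
    ⟨h.1.map_sliding hXY, h.2.map_sliding hXY⟩
  refine ⟨hxx', fun m => ?_⟩
  obtain ⟨xb, hxb, hl, ⟨n, hmn, hr⟩, hπ⟩ := h.1.2 m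
  have hxbx' : TransEquiv Y (sliding Ψ) (sliding Φ xb) (sliding Φ x') :=
    transEquiv_of_right_asymptotic (hXY hxb) (hXY hx') (hπ.trans h.1.1)
      fun i hi => congrArg Φ (hr i hi)
  exact ⟨xb, hxb, hl, ⟨n, hmn, hr⟩, hxbx'.trans hY hxx'.symm⟩

end Transition

theorem relClass_eq_transClass_general
    {A B C : Type*}
    (X : Set (ℤ → A)) (Y : Set (ℤ → B))
    (hYsft : IsOneStepSFT Y)
    (Φ : A → B) (Ψ : B → C)
    (hφ : sliding Φ '' X = Y)
    (x : ℤ → A) (hx : x ∈ X) :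
    relClass X Y (sliding Φ) (sliding Ψ) x = transClass X (sliding (Ψ ∘ Φ)) x := by
  have hXY : MapsTo (sliding Φ) X Y := hφ ▸ mapsTo_image _ _
  ext x'
  constructor
  · rintro ⟨hx', hrel⟩
    exact ⟨hx', hrel.1.transTo, hrel.2.transTo⟩
  · rintro ⟨hx', h⟩
    exact ⟨hx', h.relTransTo hYsft hXY hx', h.symm.relTransTo hYsft hXY hx⟩

theorem relClass_eq_transClass
    {A B C : Type*} [Fintype A] [Fintype B] [Fintype C]
    [TopologicalSpace A] [DiscreteTopology A]
    [TopologicalSpace B] [DiscreteTopology B]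
    [TopologicalSpace C] [DiscreteTopology C]
    (X : Set (ℤ → A)) (Y : Set (ℤ → B)) (Z : Set (ℤ → C))
    (hX : IsShiftSpace X) (hXirr : IsIrreducibleShift X) (hXsft : IsOneStepSFT X)
    (hY : IsShiftSpace Y) (hYirr : IsIrreducibleShift Y) (hYsft : IsOneStepSFT Y)
    (hZ : IsShiftSpace Z)
    (Φ : A → B) (Ψ : B → C)
    (hφ : sliding Φ '' X = Y) (hψ : sliding Ψ '' Y = Z)
    (x : ℤ → A) (hx : x ∈ X) :
    relClass X Y (sliding Φ) (sliding Ψ) x = transClass X (sliding (Ψ ∘ Φ)) x :=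
  relClass_eq_transClass_general X Y hYsft Φ Ψ hφ x hx

end SymbDyn
end

section
/- Let X and Y be irreducible 1-step shifts of finite type over finite alphabets, Z a shift space, and φ : X → Y, ψ : Y → Z 1-block factor codes, with π = ψ ∘ φ. Then any two points in a single π-transition class are sent by φ into the same ψ-transition class: for all x, x' ∈ X, if x ∼_π x' then φ(x) ∼_ψ φ(x'). -/
/- Common definitions: shift spaces over finite alphabets, 1-block factor codes,
   transition classes, class degrees, relative transition classes, relative class
   degrees, routability and depth. -/

open Set

/-! A 1-block code `φ` carries bridges for `ψ ∘ φ` to bridges for `ψ`: it preserves agreement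
of points on half-lines, and `ψ (φ xb) = ψ (φ x)` is exactly the bridge condition for `ψ ∘ φ`. -/

namespace SymbDyn

section

variable {A B C : Type*} {X : Set (ℤ → A)} {Y : Set (ℤ → B)} {Φ : A → B}
  {ψ : (ℤ → B) → ℤ → C}

theorem IsBridge.sliding (hXY : MapsTo (sliding Φ) X Y) {m : ℤ} {x x' xb : ℤ → A}
    (h : IsBridge X (ψ ∘ sliding Φ) m x x' xb) :
    IsBridge Y ψ m (sliding Φ x) (sliding Φ x') (sliding Φ xb) :=
  let ⟨hxb, hleft, ⟨n, hmn, hright⟩, hπ⟩ := h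
  ⟨hXY hxb, fun i hi => congrArg Φ (hleft i hi),
    ⟨n, hmn, fun i hi => congrArg Φ (hright i hi)⟩, hπ⟩

theorem TransTo.sliding (hXY : MapsTo (sliding Φ) X Y) {x x' : ℤ → A}
    (h : TransTo X (ψ ∘ sliding Φ) x x') :
    TransTo Y ψ (sliding Φ x) (sliding Φ x') :=
  ⟨h.1, fun m => let ⟨_, hb⟩ := h.2 m; ⟨_, hb.sliding hXY⟩⟩

theorem TransEquiv.sliding (hXY : MapsTo (sliding Φ) X Y) {x x' : ℤ → A}
    (h : TransEquiv X (ψ ∘ sliding Φ) x x') :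
    TransEquiv Y ψ (sliding Φ x) (sliding Φ x') :=
  ⟨h.1.sliding hXY, h.2.sliding hXY⟩

end

theorem pi_equiv_implies_psi_equiv_general
    {A B C : Type*}
    (X : Set (ℤ → A)) (Y : Set (ℤ → B))
    (Φ : A → B) (Ψ : B → C)
    (hφ : sliding Φ '' X = Y)
    (x x' : ℤ → A)
    (h : TransEquiv X (sliding (Ψ ∘ Φ)) x x') :
    TransEquiv Y (sliding Ψ) (sliding Φ x) (sliding Φ x') :=
  TransEquiv.sliding (ψ := sliding Ψ) (hφ ▸ mapsTo_image _ _) h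

theorem pi_equiv_implies_psi_equiv
    {A B C : Type*} [Fintype A] [Fintype B] [Fintype C]
    [TopologicalSpace A] [DiscreteTopology A]
    [TopologicalSpace B] [DiscreteTopology B]
    [TopologicalSpace C] [DiscreteTopology C]
    (X : Set (ℤ → A)) (Y : Set (ℤ → B)) (Z : Set (ℤ → C))
    (hX : IsShiftSpace X) (hXirr : IsIrreducibleShift X) (hXsft : IsOneStepSFT X)
    (hY : IsShiftSpace Y) (hYirr : IsIrreducibleShift Y) (hYsft : IsOneStepSFT Y)
    (hZ : IsShiftSpace Z)
    (Φ : A → B) (Ψ : B → C)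
    (hφ : sliding Φ '' X = Y) (hψ : sliding Ψ '' Y = Z)
    (x x' : ℤ → A) (hx : x ∈ X) (hx' : x' ∈ X)
    (h : TransEquiv X (sliding (Ψ ∘ Φ)) x x') :
    TransEquiv Y (sliding Ψ) (sliding Φ x) (sliding Φ x') :=
  pi_equiv_implies_psi_equiv_general X Y Φ Ψ hφ x x' h

end SymbDyn
end

section
/- Let X = {0,1}^ℤ be the full 2-shift, let φ : X → X be the factor code given by φ(x)_i = x_i + x_{i+1} (mod 2), let Z = {z₀} ⊆ {0}^ℤ where z₀ is the constant-0 point, let ψ : X → Z be the constant (trivial) factor code, and let π = ψ ∘ φ. Then d_π = 1 while d_φ = 2 and d_ψ = 1; in particular d_π < d_φ · d_ψ, so the multiplicative equality for class degrees fails for the composition of infinite-to-one factor codes. -/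
/- Common definitions: shift spaces over finite alphabets, 1-block factor codes,
   transition classes, class degrees, relative transition classes, relative class
   degrees, routability and depth. -/

open Set

/-!
A constant code can splice any two points at any coordinate, so it has a single transition
class; this gives `d_ψ = d_{ψ ∘ φ} = 1`. Over `ZMod 2` the code `φ` is the forward difference
`Δ x i = x (i + 1) - x i`, whose fibres are the cosets of the constant sequences. A bridge for
`Δ` agrees with `x` at one coordinate and has the same image, so it is `x` itself: transition
classes of `Δ` are singletons and `d_Δ = |ZMod 2| = 2`.
-/

open scoped fwdDiff

namespace SymbDyn

section TransitionClasses

variable {A C : Type*} {X : Set (ℤ → A)} {π : (ℤ → A) → ℤ → C} {x : ℤ → A}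

lemma transTo_refl (hx : x ∈ X) : TransTo X π x x :=
  ⟨rfl, fun m => ⟨x, hx, fun _ _ => rfl, ⟨m + 1, by omega, fun _ _ => rfl⟩, rfl⟩⟩

lemma mem_transClass_self (hx : x ∈ X) : x ∈ transClass X π x :=
  ⟨hx, transTo_refl hx, transTo_refl hx⟩

lemma ptDeg_eq_encard_of_transTo_imp_eq (h : ∀ x ∈ X, ∀ x', TransTo X π x x' → x' = x)
    (z : ℤ → C) : ptDeg X π z = (X ∩ π ⁻¹' {z}).encard := by
  have hclass : ∀ x ∈ X, transClass X π x = {x} := fun x hx =>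
    Set.eq_singleton_iff_unique_mem.2 ⟨mem_transClass_self hx, fun x' hx' => h x hx x' hx'.2.1⟩
  have hset : {S | ∃ x ∈ X, π x = z ∧ S = transClass X π x} = singleton '' (X ∩ π ⁻¹' {z}) := by
    ext S
    constructor
    · rintro ⟨x, hx, rfl, rfl⟩
      exact ⟨x, ⟨hx, rfl⟩, (hclass x hx).symm⟩
    · rintro ⟨x, ⟨hx, hxz⟩, rfl⟩
      exact ⟨x, hx, hxz, (hclass x hx).symm⟩
  rw [ptDeg, hset, Set.singleton_injective.encard_image]

lemma transTo_univ_of_const (hπ : ∀ x x', π x = π x') (x x' : ℤ → A) :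
    TransTo univ π x x' :=
  ⟨hπ x x', fun m => ⟨fun i => if i ≤ m then x i else x' i, trivial, fun i hi => if_pos hi,
    ⟨m + 1, by omega, fun i hi => if_neg (by omega)⟩, hπ _ _⟩⟩

lemma classDeg_univ_singleton_of_const [Nonempty A] {z : ℤ → C} (hπ : ∀ x, π x = z) :
    classDeg univ {z} π = 1 := by
  have hconst : ∀ x x', π x = π x' := fun x x' => (hπ x).trans (hπ x').symm
  have hclass : ∀ x, transClass univ π x = univ := fun x =>
    Set.eq_univ_of_forall fun x' =>
      ⟨trivial, transTo_univ_of_const hconst x x', transTo_univ_of_const hconst x' x⟩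
  obtain ⟨x₀⟩ : Nonempty (ℤ → A) := inferInstance
  have hset : {S | ∃ x ∈ univ, π x = z ∧ S = transClass univ π x} = {univ} :=
    Set.eq_singleton_iff_unique_mem.2
      ⟨⟨x₀, trivial, hπ x₀, (hclass x₀).symm⟩, fun S ⟨x, _, _, hS⟩ => hS.trans (hclass x)⟩
  simp only [classDeg, ptDeg, hset, Set.encard_singleton, Set.mem_singleton_iff, iInf_iInf_eq_left]

end TransitionClasses

section ForwardDifference

variable {G : Type*} [AddCommGroup G]

lemma exists_fwdDiff_eq (y : ℤ → G) : ∃ x : ℤ → G, Δ_[1] x = y := by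
  refine ⟨fun i => ∑ k ∈ Finset.Ico 0 i, y k - ∑ k ∈ Finset.Ico i 0, y k, funext fun i => ?_⟩
  simp only [fwdDiff]
  rcases le_or_gt 0 i with hi | hi
  · rw [Finset.Ico_eq_empty_of_le hi, Finset.Ico_eq_empty_of_le (by omega : (0 : ℤ) ≤ i + 1),
      Finset.Ico_add_one_right_eq_Icc, ← Finset.sum_Ico_add_eq_sum_Icc hi]
    abel
  · rw [Finset.Ico_eq_empty_of_le hi.le, Finset.Ico_eq_empty_of_le (by omega : i + 1 ≤ 0),
      ← Finset.insert_Ico_add_one_left_eq_Ico hi, Finset.sum_insert (by simp)]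
    abel

lemma sub_eq_sub_of_fwdDiff_eq {x x' : ℤ → G} (h : Δ_[1] x = Δ_[1] x') (i j : ℤ) :
    x' i - x i = x' j - x j := by
  have hper : Function.Periodic (x' - x) 1 := fun k => by
    have hk := congrFun h k
    simp only [fwdDiff] at hk
    simp only [Pi.sub_apply]
    rw [sub_eq_sub_iff_sub_eq_sub]
    exact hk.symm
  simpa using (hper.int_mul_eq i).trans (hper.int_mul_eq j).symm

lemma eq_of_transTo_fwdDiff {X : Set (ℤ → G)} {x x' : ℤ → G} (h : TransTo X (fwdDiff 1) x x') :
    x' = x := by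
  obtain ⟨hxx', hbridge⟩ := h
  obtain ⟨xb, -, hleft, ⟨n, -, hright⟩, hxb⟩ := hbridge 0
  have hxb_eq : xb = x := funext fun i =>
    sub_eq_zero.1 <| (sub_eq_sub_of_fwdDiff_eq hxb.symm i 0).trans (by rw [hleft 0 le_rfl, sub_self])
  funext i
  refine sub_eq_zero.1 <| (sub_eq_sub_of_fwdDiff_eq hxx' i n).trans ?_
  rw [← hright n le_rfl, hxb_eq, sub_self]

lemma fwdDiff_preimage_singleton {x₀ y : ℤ → G} (hx₀ : Δ_[1] x₀ = y) :
    Δ_[1] ⁻¹' {y} = Set.range fun c : G => x₀ + fun _ => c := by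
  ext x
  constructor
  · rintro rfl
    refine ⟨x 0 - x₀ 0, funext fun i => ?_⟩
    simp only [Pi.add_apply, ← sub_eq_sub_of_fwdDiff_eq hx₀ i 0]
    abel
  · rintro ⟨c, rfl⟩
    rw [Set.mem_preimage, fwdDiff_add, fwdDiff_const, hx₀]
    exact add_zero y

theorem classDeg_fwdDiff : classDeg univ univ (fwdDiff 1 : (ℤ → G) → ℤ → G) = ENat.card G := by
  have hpt : ∀ y : ℤ → G, ptDeg univ (fwdDiff 1) y = ENat.card G := fun y => by
    obtain ⟨x₀, hx₀⟩ := exists_fwdDiff_eq y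
    rw [ptDeg_eq_encard_of_transTo_imp_eq (fun _ _ _ => eq_of_transTo_fwdDiff), Set.univ_inter]
    have hinj : Function.Injective fun c : G => x₀ + fun _ => c := fun c c' h => by
      simpa using congrFun h 0
    rw [fwdDiff_preimage_singleton hx₀, ← Set.image_univ, hinj.encard_image, Set.encard_univ]
  simp [classDeg, hpt]

end ForwardDifference

theorem multiplicative_equality_fails :
    let X : Set (ℤ → ZMod 2) := Set.univ
    let φ : (ℤ → ZMod 2) → ℤ → ZMod 2 := fun x i => x i + x (i + 1)
    let z₀ : ℤ → ZMod 2 := fun _ => 0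
    let Z : Set (ℤ → ZMod 2) := {z₀}
    let ψ : (ℤ → ZMod 2) → ℤ → ZMod 2 := fun _ => z₀
    classDeg X Z (fun x => ψ (φ x)) = 1 ∧
      classDeg X X φ = 2 ∧ classDeg X Z ψ = 1 ∧
      classDeg X Z (fun x => ψ (φ x)) < classDeg X X φ * classDeg X Z ψ := by
  intro X φ z₀ Z ψ
  have hφ : φ = fwdDiff 1 := funext₂ fun x i => by
    simp only [φ, fwdDiff, CharTwo.sub_eq_add, add_comm]
  have hψφ : classDeg X Z (fun x => ψ (φ x)) = 1 := classDeg_univ_singleton_of_const fun _ => rfl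
  have hφ2 : classDeg X X φ = 2 := by
    rw [hφ, classDeg_fwdDiff, ENat.card_eq_coe_fintype_card, ZMod.card]
    rfl
  have hψ : classDeg X Z ψ = 1 := classDeg_univ_singleton_of_const fun _ => rfl
  refine ⟨hψφ, hφ2, hψ, ?_⟩
  simp only [hψφ, hφ2, hψ]
  norm_num

end SymbDyn
end
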